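/- Let W be the linear form ω_W on the dual algebra A^! defined by composing W ∈ (A^!_m)* with the projection A^! → A^!_m, and let σ_W be the automorphism of A^! induced by Q_W. Then ω_W(xy) = ω_W(σ_W(y)x) for all homogeneous x, y ∈ A^!, i.e., ω_W is a σ_W-twisted trace on A^!. -/

import Mathlib

/-- Concatenation of component tensors: `(ξ ⊗ η)_{f} = ξ_{f|first a} · η_{f|last b}`. -/
def concatT {K : Type*} [Field K] {q : ℕ} {a b M : ℕ} (hab : a + b = M)
    (ξ : (Fin a → Fin q) → K) (η : (Fin b → Fin q) → K) :
    (Fin M → Fin q) → K :=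
  fun f => ξ (fun i => f ⟨i.val, by omega⟩) * η (fun j => f ⟨a + j.val, by omega⟩)

/-- The action of a matrix `Q` on a degree-`b` component tensor,
`(Q^{⊗b} η)_f = Σ_g (∏_i Q_{f i, g i}) η_g`. -/
def qTensor {K : Type*} [Field K] {q : ℕ} {b : ℕ} (Q : Matrix (Fin q) (Fin q) K)
    (η : (Fin b → Fin q) → K) : (Fin b → Fin q) → K :=
  fun f => ∑ g : Fin b → Fin q, (∏ i : Fin b, Q (f i) (g i)) * η g

/-!
One application of the cyclicity of `W` moves the last letter of a word to the front, twisted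
by `Q`: `W(u x) = ∑_ν Q_{ν x} W(ν u)`. Iterating this `b` times on a word `u v` with `|v| = b`
gives `W(u v) = ∑_g (∏_i Q_{g_i v_i}) W(g u)`. Both sides of the theorem are bilinear in
`(ξ, η)`, and expanding them over words reduces the theorem to this identity.
-/

namespace Fin

variable {α : Sort*}

theorem snoc_comp_cast {m n : ℕ} (f : Fin m → α) (x : α) (h : n + 1 = m + 1) :
    snoc f x ∘ Fin.cast h = snoc (f ∘ Fin.cast (Nat.succ_injective h)) x := by
  obtain rfl := Nat.succ_injective h
  rfl

theorem cons_comp_cast {m n : ℕ} (x : α) (f : Fin m → α) (h : n = m) :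
    cons x (f ∘ Fin.cast h) = cons x f ∘ Fin.cast (congrArg Nat.succ h) := by
  subst h
  rfl

end Fin

namespace Fintype

variable {α M : Type*} [Fintype α] [AddCommMonoid M]

theorem sum_pi_fin_succ {n : ℕ} (F : (Fin (n + 1) → α) → M) :
    ∑ g, F g = ∑ g : Fin n → α, ∑ x, F (Fin.snoc g x) := by
  rw [← (Fin.snocEquiv fun _ => α).sum_comp, Fintype.sum_prod_type_right]
  rfl

theorem sum_pi_fin_add {a b n : ℕ} (h : a + b = n) (F : (Fin n → α) → M) :
    ∑ f, F f = ∑ u : Fin a → α, ∑ v : Fin b → α, F (Fin.append u v ∘ Fin.cast h.symm) := by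
  rw [← Fintype.sum_prod_type',
    ← ((Fin.appendEquiv a b).trans ((finCongr h).arrowCongr (Equiv.refl α))).sum_comp]
  rfl

end Fintype

theorem apply_snoc_eq_sum_cons {K : Type*} [Semiring K] {q m : ℕ}
    (W : (Fin (m + 1) → Fin q) → K) (Q : Matrix (Fin q) (Fin q) K)
    (hQ : ∀ f : Fin (m + 1) → Fin q,
      W f = ∑ ν : Fin q, Q ν (f (Fin.last m)) *
        W (fun k => if k = 0 then ν else f ⟨k.val - 1, (Nat.sub_le _ _).trans_lt k.isLt⟩))
    (u : Fin m → Fin q) (x : Fin q) :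
    W (Fin.snoc u x) = ∑ ν, Q ν x * W (Fin.cons ν u) := by
  rw [hQ]
  refine Fintype.sum_congr _ _ fun ν => ?_
  congr 2
  · simp
  · funext k
    induction k using Fin.cases with
    | zero => simp
    | succ j =>
      rw [if_neg (Fin.succ_ne_zero j), Fin.cons_succ]
      exact Fin.snoc_castSucc (α := fun _ => Fin q) ..

theorem apply_append_eq_sum {K : Type*} [CommSemiring K] {q m : ℕ}
    (W : (Fin (m + 1) → Fin q) → K) (Q : Matrix (Fin q) (Fin q) K)
    (hW : ∀ (u : Fin m → Fin q) (x : Fin q), W (Fin.snoc u x) = ∑ ν, Q ν x * W (Fin.cons ν u)) :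
    ∀ {a b : ℕ} (h : a + b = m + 1) (u : Fin a → Fin q) (v : Fin b → Fin q),
      W (Fin.append u v ∘ Fin.cast h.symm) =
        ∑ g : Fin b → Fin q, (∏ i, Q (g i) (v i)) *
          W (Fin.append g u ∘ Fin.cast (h.symm.trans (add_comm a b))) := by
  intro a b
  induction b generalizing a with
  | zero =>
    intro h u v
    rw [Fintype.sum_unique, Fin.prod_univ_zero, one_mul, Fin.append_right_nil u v rfl,
      Fin.append_left_nil _ u rfl]
    rfl
  | succ b ih =>
    intro h u v
    have hm : m = a + b := by omega
    have hsnoc : Fin.append u v ∘ Fin.cast h.symm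
        = Fin.snoc (Fin.append u (Fin.init v) ∘ Fin.cast hm) (v (Fin.last b)) := by
      rw [← Fin.snoc_init_self v, Fin.append_snoc, Fin.snoc_comp_cast, Fin.init_snoc,
        Fin.snoc_last]
    have hcons : ∀ ν, Fin.cons ν (Fin.append u (Fin.init v) ∘ Fin.cast hm)
        = Fin.append (Fin.cons ν u : Fin (a + 1) → Fin q) (Fin.init v) ∘ Fin.cast (by omega) := by
      intro ν
      rw [Fin.cons_comp_cast, Fin.append_cons]
      ext i
      simp
    have hswap : ∀ ν (g : Fin b → Fin q),
        Fin.append g (Fin.cons ν u : Fin (a + 1) → Fin q) ∘ Fin.cast (by omega)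
          = Fin.append (Fin.snoc g ν) u ∘ Fin.cast (h.symm.trans (add_comm a (b + 1))) := by
      intro ν g
      rw [Fin.append_right_cons]
      ext i
      simp
    rw [hsnoc, hW, Fintype.sum_pi_fin_succ, Finset.sum_comm]
    refine Fintype.sum_congr _ _ fun ν => ?_
    rw [hcons, ih (by omega), Finset.mul_sum]
    refine Fintype.sum_congr _ _ fun g => ?_
    rw [hswap, Fin.prod_univ_castSucc]
    simp only [Fin.snoc_castSucc, Fin.snoc_last, Fin.init]
    ring

theorem concatT_append {K : Type*} [Field K] {q a b M : ℕ} (hab : a + b = M)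
    (ξ : (Fin a → Fin q) → K) (η : (Fin b → Fin q) → K) (u : Fin a → Fin q)
    (v : Fin b → Fin q) :
    concatT hab ξ η (Fin.append u v ∘ Fin.cast hab.symm) = ξ u * η v :=
  congrArg₂ (ξ · * η ·) (funext (Fin.append_left u v)) (funext (Fin.append_right u v))

/-- `ω_W` is a `σ_W`-twisted trace on the dual algebra `A^!`: for a preregular
`(m+1)`-linear form `W` with cyclicity matrix `Q`, and homogeneous elements
`x, y` of `A^!` of degrees `a, b` with `a + b = m + 1`, represented by
component tensors `ξ, η`, one has `ω_W(xy) = ω_W(σ_W(y)x)`, i.e.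
`⟨W, ξ ⊗ η⟩ = ⟨W, (Q^{⊗b}η) ⊗ ξ⟩`. -/
theorem stmt_13 {K : Type*} [Field K] {q m : ℕ}
    (W : (Fin (m + 1) → Fin q) → K)
    (Q : Matrix (Fin q) (Fin q) K)
    (hQ : ∀ f : Fin (m + 1) → Fin q,
      W f = ∑ ν : Fin q, Q ν (f (Fin.last m)) *
        W (fun k => if k = 0 then ν else f ⟨k.val - 1, by omega⟩)) :
    ∀ (a b : ℕ) (hab : a + b = m + 1)
      (ξ : (Fin a → Fin q) → K) (η : (Fin b → Fin q) → K),
      ∑ f : Fin (m + 1) → Fin q, W f * concatT hab ξ η f =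
      ∑ f : Fin (m + 1) → Fin q,
        W f * concatT (by omega : b + a = m + 1) (qTensor Q η) ξ f := by
  intro a b hab ξ η
  have hW := apply_append_eq_sum W Q (apply_snoc_eq_sum_cons W Q hQ) hab
  rw [Fintype.sum_pi_fin_add hab, Fintype.sum_pi_fin_add (by omega : b + a = m + 1)]
  simp only [concatT_append, hW, qTensor, Finset.sum_mul, Finset.mul_sum]
  rw [Finset.sum_comm_cycle]
  refine Fintype.sum_congr _ _ fun g => Fintype.sum_congr _ _ fun u =>
    Fintype.sum_congr _ _ fun v => ?_
  ring
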